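/- arXiv:1508.00869 — 4 statements merged into one kernel-verified Lean document; each statement's English description precedes it below -/
import Mathlib

section
/- Under the same hypotheses (P(E|x_j) = α + δ_j, |δ_j| ≤ δ, α ≥ 2δ > 0), each posterior probability satisfies |P(x_j|E) − P(x_j)| ≤ 2δ P(x_j)/(α − δ) ≤ 4δ P(x_j)/α. -/
open Finset

theorem posterior_prob_shift {n : ℕ} (x p δvec : Fin n → ℝ) (α δ : ℝ)
    (hp : ∀ j, 0 ≤ p j) (hsum : ∑ j, p j = 1)
    (hδ : ∀ j, |δvec j| ≤ δ) (hα : 2 * δ ≤ α) (hδpos : 0 < δ) (j : Fin n) :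
    |(α + δvec j) * p j / (∑ k, (α + δvec k) * p k) - p j| ≤ 2 * δ * p j / (α - δ) ∧
    2 * δ * p j / (α - δ) ≤ 4 * δ * p j / α := by
  have hα0 : 0 < α := by linarith
  set T := ∑ k, δvec k * p k with hT
  have hTabs : |T| ≤ δ := by
    calc |T| ≤ ∑ k, |δvec k * p k| := Finset.abs_sum_le_sum_abs _ _
      _ ≤ ∑ k, δ * p k := Finset.sum_le_sum (fun i _ => by
          rw [abs_mul, abs_of_nonneg (hp i)]
          exact mul_le_mul_of_nonneg_right (hδ i) (hp i))
      _ = δ := by rw [← Finset.mul_sum, hsum, mul_one]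
  have hTle := abs_le.mp hTabs
  have hS : ∑ k, (α + δvec k) * p k = α + T := by
    simp [add_mul, Finset.sum_add_distrib, ← Finset.mul_sum, hsum, hT]
  have hSpos : 0 < α + T := by linarith
  have hαδ : 0 < α - δ := by linarith
  constructor
  · rw [hS]
    have key : (α + δvec j) * p j / (α + T) - p j = p j * (δvec j - T) / (α + T) := by
      field_simp
      ring
    rw [key, abs_div, abs_of_pos hSpos, abs_mul, abs_of_nonneg (hp j)]
    have hδj := abs_le.mp (hδ j)
    have h1 : |δvec j - T| ≤ 2 * δ := by
      rw [abs_le]; constructor <;> linarith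
    have hnum : p j * |δvec j - T| ≤ 2 * δ * p j := by
      nlinarith [hp j]
    exact div_le_div₀ (by nlinarith [hp j]) hnum hαδ (by linarith)
  · rw [div_le_div_iff₀ hαδ hα0]
    nlinarith [hp j, mul_nonneg (mul_nonneg hδpos.le (hp j)) (by linarith : (0:ℝ) ≤ α - 2*δ)]
end

section
/- Under the hypotheses P(E|x_j) = α + δ_j with |δ_j| ≤ δ and α ≥ 10δ > 0, the posterior variance σ₁² = Σ_j P(x_j|E)(x_j−μ₁)² and the prior variance σ² = Σ_j P(x_j)(x_j−μ₀)² satisfy |σ₁² − σ²| ≤ 10δσ²/α, and hence σ₁² ≥ σ²(1 − 10δ/α) > 0. -/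
open Finset

theorem posterior_variance_stability {n : ℕ} (x p δvec : Fin n → ℝ) (α δ : ℝ)
    (hp : ∀ j, 0 ≤ p j) (hsum : ∑ j, p j = 1)
    (hδ : ∀ j, |δvec j| ≤ δ) (hα : 10 * δ ≤ α) (hδpos : 0 < δ)
    (q : Fin n → ℝ)
    (hq : ∀ j, q j = (α + δvec j) * p j / (∑ k, (α + δvec k) * p k))
    (μ₀ μ₁ σsq σ₁sq : ℝ)
    (hμ₀ : μ₀ = ∑ j, p j * x j)
    (hμ₁ : μ₁ = ∑ j, q j * x j)
    (hσsq : σsq = ∑ j, p j * (x j - μ₀)^2)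
    (hσ₁sq : σ₁sq = ∑ j, q j * (x j - μ₁)^2)
    (hσpos : 0 < σsq) :
    |σ₁sq - σsq| ≤ 10 * δ * σsq / α ∧ σsq * (1 - 10 * δ / α) ≤ σ₁sq := by
  have hαpos : 0 < α := lt_of_lt_of_le (by linarith) hα
  have hαδ : 0 < α - δ := by linarith
  obtain ⟨S, hSdef⟩ : ∃ S : ℝ, S = ∑ k, (α + δvec k) * p k := ⟨_, rfl⟩
  obtain ⟨D, hDdef⟩ : ∃ D : ℝ, D = ∑ k, δvec k * p k := ⟨_, rfl⟩
  simp only [← hSdef] at hq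
  have hS : S = α + D := by
    rw [hSdef, hDdef]
    simp only [add_mul, Finset.sum_add_distrib, ← Finset.mul_sum, hsum, mul_one]
  have hD : |D| ≤ δ := by
    rw [hDdef]
    calc |∑ k, δvec k * p k| ≤ ∑ k, |δvec k * p k| := Finset.abs_sum_le_sum_abs _ _
    _ ≤ ∑ k, δ * p k := by
        refine Finset.sum_le_sum fun j _ => ?_
        rw [abs_mul, abs_of_nonneg (hp j)]
        exact mul_le_mul_of_nonneg_right (hδ j) (hp j)
    _ = δ := by rw [← Finset.mul_sum, hsum, mul_one]
  have hSge : α - δ ≤ S := by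
    have := abs_le.mp hD
    rw [hS]; linarith [this.1]
  have hSpos : 0 < S := lt_of_lt_of_le hαδ hSge
  obtain ⟨c, hcdef⟩ : ∃ c : ℝ, c = 2 * δ / (α - δ) := ⟨_, rfl⟩
  have hcpos : 0 < c := by rw [hcdef]; positivity
  have hε : ∀ j, |q j - p j| ≤ c * p j := by
    intro j
    have h1 : q j - p j = p j * (δvec j - D) / S := by
      rw [hq j]
      field_simp
      rw [hS]; ring
    rw [h1, abs_div, abs_mul, abs_of_nonneg (hp j), abs_of_pos hSpos]
    have h2 : |δvec j - D| ≤ 2 * δ := by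
      calc |δvec j - D| ≤ |δvec j| + |D| := abs_sub _ _
      _ ≤ 2 * δ := by linarith [hδ j]
    calc p j * |δvec j - D| / S ≤ p j * (2 * δ) / (α - δ) :=
          div_le_div₀ (mul_nonneg (hp j) (by positivity))
            (mul_le_mul_of_nonneg_left h2 (hp j)) hαδ hSge
    _ = c * p j := by rw [hcdef]; ring
  have hqsum : ∑ j, q j = 1 := by
    simp only [hq]
    rw [← Finset.sum_div, ← hSdef, div_self hSpos.ne']
  -- T := second moment of q around μ₀
  obtain ⟨T, hTdef⟩ : ∃ T : ℝ, T = ∑ j, q j * (x j - μ₀)^2 := ⟨_, rfl⟩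
  have hA : |T - σsq| ≤ c * σsq := by
    have h1 : T - σsq = ∑ j, (q j - p j) * (x j - μ₀)^2 := by
      rw [hTdef, hσsq, ← Finset.sum_sub_distrib]
      exact Finset.sum_congr rfl fun j _ => by ring
    rw [h1]
    calc |∑ j, (q j - p j) * (x j - μ₀)^2| ≤ ∑ j, |(q j - p j) * (x j - μ₀)^2| :=
          Finset.abs_sum_le_sum_abs _ _
    _ ≤ ∑ j, c * p j * (x j - μ₀)^2 := by
        refine Finset.sum_le_sum fun j _ => ?_
        rw [abs_mul, abs_pow, sq_abs]
        exact mul_le_mul_of_nonneg_right (hε j) (sq_nonneg _)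
    _ = c * σsq := by
        rw [hσsq, Finset.mul_sum]
        exact Finset.sum_congr rfl fun j _ => by ring
  -- Cauchy–Schwarz
  have hCS : (∑ j, p j * |x j - μ₀|)^2 ≤ σsq := by
    have := Finset.sum_mul_sq_le_sq_mul_sq Finset.univ
      (fun j => Real.sqrt (p j)) (fun j => Real.sqrt (p j) * |x j - μ₀|)
    have e1 : ∀ j : Fin n, Real.sqrt (p j) * (Real.sqrt (p j) * |x j - μ₀|)
        = p j * |x j - μ₀| := by
      intro j; rw [← mul_assoc, Real.mul_self_sqrt (hp j)]
    have e2 : ∀ j : Fin n, (Real.sqrt (p j))^2 = p j := fun j => Real.sq_sqrt (hp j)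
    have e3 : ∀ j : Fin n, (Real.sqrt (p j) * |x j - μ₀|)^2 = p j * (x j - μ₀)^2 := by
      intro j; rw [mul_pow, e2, sq_abs]
    simp only [e1, e2, e3] at this
    rw [hsum, one_mul, ← hσsq] at this
    exact this
  have hμdiff : (μ₁ - μ₀)^2 ≤ c^2 * σsq := by
    have e : ∀ j : Fin n, (q j - p j) * (x j - μ₀)
        = q j * x j - p j * x j - μ₀ * q j + μ₀ * p j := fun j => by ring
    have h1 : μ₁ - μ₀ = ∑ j, (q j - p j) * (x j - μ₀) := by
      simp only [e, Finset.sum_add_distrib, Finset.sum_sub_distrib, ← Finset.mul_sum,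
        hqsum, hsum, mul_one]
      rw [← hμ₁, ← hμ₀]
      ring
    have h2 : |μ₁ - μ₀| ≤ c * ∑ j, p j * |x j - μ₀| := by
      rw [h1]
      calc |∑ j, (q j - p j) * (x j - μ₀)| ≤ ∑ j, |(q j - p j) * (x j - μ₀)| :=
            Finset.abs_sum_le_sum_abs _ _
      _ ≤ ∑ j, c * (p j * |x j - μ₀|) := by
          refine Finset.sum_le_sum fun j _ => ?_
          rw [abs_mul]
          calc |q j - p j| * |x j - μ₀| ≤ c * p j * |x j - μ₀| :=
                mul_le_mul_of_nonneg_right (hε j) (abs_nonneg _)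
          _ = c * (p j * |x j - μ₀|) := by ring
      _ = c * ∑ j, p j * |x j - μ₀| := by rw [Finset.mul_sum]
    have hnn : (0:ℝ) ≤ ∑ j, p j * |x j - μ₀| :=
      Finset.sum_nonneg fun j _ => mul_nonneg (hp j) (abs_nonneg _)
    calc (μ₁ - μ₀)^2 = |μ₁ - μ₀|^2 := (sq_abs _).symm
    _ ≤ (c * ∑ j, p j * |x j - μ₀|)^2 := pow_le_pow_left₀ (abs_nonneg _) h2 2
    _ = c^2 * (∑ j, p j * |x j - μ₀|)^2 := by ring
    _ ≤ c^2 * σsq := mul_le_mul_of_nonneg_left hCS (sq_nonneg c)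
  -- variance decomposition: T = σ₁sq + (μ₁ - μ₀)^2
  have hdecomp : T = σ₁sq + (μ₁ - μ₀)^2 := by
    have h1 : T = (∑ j, q j * (x j)^2) - 2 * μ₀ * μ₁ + μ₀^2 := by
      have e : ∀ j : Fin n, q j * (x j - μ₀)^2
          = q j * (x j)^2 - 2 * μ₀ * (q j * x j) + μ₀^2 * q j := fun j => by ring
      rw [hTdef]
      simp only [e, Finset.sum_add_distrib, Finset.sum_sub_distrib, ← Finset.mul_sum,
        hqsum, ← hμ₁]
      ring
    have h2 : σ₁sq = (∑ j, q j * (x j)^2) - 2 * μ₁ * μ₁ + μ₁^2 := by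
      have e : ∀ j : Fin n, q j * (x j - μ₁)^2
          = q j * (x j)^2 - 2 * μ₁ * (q j * x j) + μ₁^2 * q j := fun j => by ring
      rw [hσ₁sq]
      simp only [e, Finset.sum_add_distrib, Finset.sum_sub_distrib, ← Finset.mul_sum,
        hqsum, ← hμ₁]
      ring
    rw [h1, h2]; ring
  -- key arithmetic: c + c^2 ≤ 10 δ / α
  have hc1 : c * (α - δ) = 2 * δ := by rw [hcdef]; field_simp
  have hkey : (c + c^2) * α ≤ 10 * δ := by
    nlinarith [hc1, sq_nonneg c, mul_pos hδpos hαpos, sq_nonneg (α - δ), hcpos,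
      mul_pos hδpos hαδ, mul_pos hcpos hαδ, mul_pos (mul_pos hcpos hcpos) hαδ]
  have hkey2 : c + c^2 ≤ 10 * δ / α := by
    rw [le_div_iff₀ hαpos]; exact hkey
  have hmain : |σ₁sq - σsq| ≤ 10 * δ * σsq / α := by
    have h1 : σ₁sq - σsq = (T - σsq) - (μ₁ - μ₀)^2 := by rw [hdecomp]; ring
    have h2 : |σ₁sq - σsq| ≤ (c + c^2) * σsq := by
      rw [h1]
      have hA' := abs_le.mp hA
      rw [abs_le]
      have hsq : 0 ≤ (μ₁ - μ₀)^2 := sq_nonneg _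
      have hexp : (c + c^2) * σsq = c * σsq + c^2 * σsq := by ring
      constructor
      · linarith [hμdiff, hA'.1]
      · linarith [hA'.2]
    calc |σ₁sq - σsq| ≤ (c + c^2) * σsq := h2
    _ ≤ (10 * δ / α) * σsq := mul_le_mul_of_nonneg_right hkey2 hσpos.le
    _ = 10 * δ * σsq / α := by ring
  refine ⟨hmain, ?_⟩
  have heq : σsq * (1 - 10 * δ / α) = σsq - 10 * δ * σsq / α := by
    field_simp
  rw [heq]
  have := abs_le.mp hmain
  linarith [this.1]
end

section
/- Let (x_j) be hypotheses with prior P(x_j), prior mean μ₀, posterior mean μ₁, and likelihood P(E|x_j) = α + δ_j with |δ_j| ≤ δ. Then μ₁ − μ₀ = (Σ_j δ_j P(x_j)(x_j − μ₀)) / (Σ_j P(E|x_j) P(x_j)), and by Cauchy–Schwarz, |Σ_j δ_j P(x_j)(x_j−μ₀)| ≤ δ √(Σ_j P(x_j)(x_j−μ₀)²). -/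
open Finset

theorem mean_shift_identity {n : ℕ} (x p δvec : Fin n → ℝ) (α δ : ℝ)
    (hp : ∀ j, 0 ≤ p j) (hsum : ∑ j, p j = 1)
    (hδ : ∀ j, |δvec j| ≤ δ)
    (hden : (∑ j, (α + δvec j) * p j) ≠ 0)
    (μ₀ μ₁ : ℝ)
    (hμ₀ : μ₀ = ∑ j, p j * x j)
    (hμ₁ : μ₁ = ∑ j, ((α + δvec j) * p j / (∑ k, (α + δvec k) * p k)) * x j) :
    μ₁ - μ₀ = (∑ j, δvec j * p j * (x j - μ₀)) / (∑ j, (α + δvec j) * p j) ∧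
    |∑ j, δvec j * p j * (x j - μ₀)| ≤ δ * Real.sqrt (∑ j, p j * (x j - μ₀)^2) := by
  have hn : n ≠ 0 := by
    rintro rfl
    simp at hsum
  haveI : NeZero n := ⟨hn⟩
  have hδ0 : 0 ≤ δ := le_trans (abs_nonneg _) (hδ 0)
  constructor
  · -- identity
    have key : (∑ j, (α + δvec j) * p j * x j)
        = (∑ j, δvec j * p j * (x j - μ₀)) + μ₀ * (∑ j, (α + δvec j) * p j) := by
      rw [Finset.mul_sum, ← Finset.sum_add_distrib]
      have h1 : ∀ j : Fin n, δvec j * p j * (x j - μ₀) + μ₀ * ((α + δvec j) * p j)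
          = (α + δvec j) * p j * x j + α * (μ₀ * p j - p j * x j) := by
        intro j; ring
      rw [Finset.sum_congr rfl (fun j _ => h1 j), Finset.sum_add_distrib]
      have h2 : ∑ j, α * (μ₀ * p j - p j * x j) = 0 := by
        rw [← Finset.mul_sum, Finset.sum_sub_distrib, ← Finset.mul_sum, hsum, ← hμ₀]
        ring
      rw [h2, add_zero]
    have hsumdiv : μ₁ = (∑ j, (α + δvec j) * p j * x j) / (∑ k, (α + δvec k) * p k) := by
      rw [hμ₁, Finset.sum_div]
      exact Finset.sum_congr rfl (fun j _ => by rw [div_mul_eq_mul_div])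
    rw [hsumdiv, key, eq_div_iff hden, sub_mul, div_mul_cancel₀ _ hden]
    ring
  · -- Cauchy–Schwarz
    set f : Fin n → ℝ := fun j => δvec j * Real.sqrt (p j) with hf
    set g : Fin n → ℝ := fun j => Real.sqrt (p j) * (x j - μ₀) with hg
    have hfg : (∑ j, δvec j * p j * (x j - μ₀)) = ∑ j, f j * g j := by
      refine Finset.sum_congr rfl (fun j _ => ?_)
      simp only [hf, hg]
      rw [show δvec j * Real.sqrt (p j) * (Real.sqrt (p j) * (x j - μ₀))
          = δvec j * (Real.sqrt (p j) * Real.sqrt (p j)) * (x j - μ₀) by ring,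
        Real.mul_self_sqrt (hp j)]
    have hf2 : ∑ j, f j ^ 2 ≤ δ ^ 2 := by
      calc ∑ j, f j ^ 2 = ∑ j, δvec j ^ 2 * p j := by
            refine Finset.sum_congr rfl (fun j _ => ?_)
            simp only [hf]
            rw [mul_pow, Real.sq_sqrt (hp j)]
        _ ≤ ∑ j, δ ^ 2 * p j := by
            refine Finset.sum_le_sum (fun j _ => ?_)
            refine mul_le_mul_of_nonneg_right ?_ (hp j)
            have h := hδ j
            nlinarith [abs_nonneg (δvec j), sq_abs (δvec j)]
        _ = δ ^ 2 := by rw [← Finset.mul_sum, hsum, mul_one]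
    have hg2 : ∑ j, g j ^ 2 = ∑ j, p j * (x j - μ₀) ^ 2 := by
      refine Finset.sum_congr rfl (fun j _ => ?_)
      simp only [hg]
      rw [mul_pow, Real.sq_sqrt (hp j)]
    have hT : 0 ≤ ∑ j, p j * (x j - μ₀) ^ 2 :=
      Finset.sum_nonneg fun j _ => mul_nonneg (hp j) (sq_nonneg _)
    have hsq : (∑ j, δvec j * p j * (x j - μ₀)) ^ 2
        ≤ δ ^ 2 * ∑ j, p j * (x j - μ₀) ^ 2 := by
      rw [hfg]
      calc (∑ j, f j * g j) ^ 2 ≤ (∑ j, f j ^ 2) * ∑ j, g j ^ 2 :=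
            Finset.sum_mul_sq_le_sq_mul_sq _ f g
        _ ≤ δ ^ 2 * ∑ j, p j * (x j - μ₀) ^ 2 := by
            rw [hg2]
            exact mul_le_mul_of_nonneg_right hf2 hT
    have h1 := Real.sqrt_le_sqrt hsq
    rw [Real.sqrt_sq_eq_abs, Real.sqrt_mul (sq_nonneg δ), Real.sqrt_sq hδ0] at h1
    exact h1
end

section
/- Let P be a probability distribution on finitely many points x_j with mean μ₀ and variance σ², and Q another distribution on the same points with mean μ₁ and |Q(x_j) − P(x_j)| ≤ η P(x_j) for all j. Then |Σ_j Q(x_j)(x_j−μ₁)² − Σ_j P(x_j)(x_j−μ₀)²| ≤ ησ² + (1+η)(μ₁−μ₀)². -/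
open Finset

theorem variance_perturbation {n : ℕ} (x p q : Fin n → ℝ) (η : ℝ)
    (hp : ∀ j, 0 ≤ p j) (hpsum : ∑ j, p j = 1)
    (hq : ∀ j, 0 ≤ q j) (hqsum : ∑ j, q j = 1)
    (hη : 0 ≤ η) (hclose : ∀ j, |q j - p j| ≤ η * p j)
    (μ₀ μ₁ σsq : ℝ)
    (hμ₀ : μ₀ = ∑ j, p j * x j) (hμ₁ : μ₁ = ∑ j, q j * x j)
    (hσsq : σsq = ∑ j, p j * (x j - μ₀)^2) :
    |(∑ j, q j * (x j - μ₁)^2) - σsq| ≤ η * σsq + (1 + η) * (μ₁ - μ₀)^2 := by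
  have h1 : ∀ μ : ℝ, ∑ j, q j * (x j - μ)^2
      = (∑ j, q j * (x j)^2) - 2*μ*μ₁ + μ^2 := by
    intro μ
    have h : ∀ j ∈ Finset.univ, q j * (x j - μ)^2
        = q j * (x j)^2 - 2*μ*(q j * x j) + μ^2 * q j := by intro j _; ring
    rw [Finset.sum_congr rfl h, Finset.sum_add_distrib, Finset.sum_sub_distrib,
      ← Finset.mul_sum, ← Finset.mul_sum, hqsum, ← hμ₁]
    ring
  have key : ∑ j, q j * (x j - μ₁)^2
      = (∑ j, (q j - p j) * (x j - μ₀)^2) + σsq - (μ₁ - μ₀)^2 := by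
    have h2 : ∑ j, (q j - p j) * (x j - μ₀)^2
        = (∑ j, q j * (x j - μ₀)^2) - σsq := by
      rw [hσsq, ← Finset.sum_sub_distrib]
      exact Finset.sum_congr rfl fun j _ => by ring
    rw [h2, h1 μ₁, h1 μ₀]; ring
  have hA : |∑ j, (q j - p j) * (x j - μ₀)^2| ≤ η * σsq := by
    calc |∑ j, (q j - p j) * (x j - μ₀)^2|
        ≤ ∑ j, |(q j - p j) * (x j - μ₀)^2| := Finset.abs_sum_le_sum_abs _ _
      _ ≤ ∑ j, η * (p j * (x j - μ₀)^2) := by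
          apply Finset.sum_le_sum
          intro j _
          rw [abs_mul, abs_of_nonneg (sq_nonneg (x j - μ₀)), ← mul_assoc]
          exact mul_le_mul_of_nonneg_right (hclose j) (sq_nonneg _)
      _ = η * σsq := by rw [← Finset.mul_sum, ← hσsq]
  have hσnn : 0 ≤ σsq := by
    rw [hσsq]
    exact Finset.sum_nonneg fun j _ => mul_nonneg (hp j) (sq_nonneg _)
  rw [key]
  have : |∑ j, (q j - p j) * (x j - μ₀)^2 + σsq - (μ₁ - μ₀)^2 - σsq|
      ≤ |∑ j, (q j - p j) * (x j - μ₀)^2| + (μ₁ - μ₀)^2 := by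
    have := abs_sub (∑ j, (q j - p j) * (x j - μ₀)^2) ((μ₁ - μ₀)^2)
    calc |∑ j, (q j - p j) * (x j - μ₀)^2 + σsq - (μ₁ - μ₀)^2 - σsq|
        = |∑ j, (q j - p j) * (x j - μ₀)^2 - (μ₁ - μ₀)^2| := by
          rw [show (∑ j, (q j - p j) * (x j - μ₀)^2) + σsq - (μ₁ - μ₀)^2 - σsq
            = (∑ j, (q j - p j) * (x j - μ₀)^2) - (μ₁ - μ₀)^2 from by ring]
      _ ≤ |∑ j, (q j - p j) * (x j - μ₀)^2| + |(μ₁ - μ₀)^2| := abs_sub _ _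
      _ = |∑ j, (q j - p j) * (x j - μ₀)^2| + (μ₁ - μ₀)^2 := by
          rw [abs_of_nonneg (sq_nonneg (μ₁ - μ₀))]
  have hη2 : 0 ≤ η * (μ₁ - μ₀)^2 := mul_nonneg hη (sq_nonneg _)
  nlinarith [hA, this]
end
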